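/- (Orlicz interpolation of intermediate derivatives, 1-D base case) Let φ be an N-function satisfying the Δ₂-condition. Then there exists C = C(Δ₂(φ)) > 0 such that for every δ > 0 and every f ∈ C²([0,δ]): φ(|f'(0)|) ≤ (C/δ) ∫₀^δ φ(δ⁻¹ |f(t)|) + φ(δ |f''(t)|) dt. -/

import Mathlib

/-!
Pick `t₁ ∈ [0, δ/3]` and `t₂ ∈ [2δ/3, δ]` where `φ(δ⁻¹|f|)` is at most its mean over the
respective third, so each of these values is bounded by `(3/δ) ∫₀^δ φ(δ⁻¹|f|)`. The mean value
theorem on `[t₁, t₂]` gives a point where `|f'| ≤ 3δ⁻¹(|f t₁| + |f t₂|)`, and `f'` varies by at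
most `K = ∫₀^δ |f''|` on `[0, δ]`. Jensen's inequality bounds `φ(K)` by `δ⁻¹ ∫₀^δ φ(δ|f''|)`,
and convexity together with the Δ₂-condition splits `φ` of the sum of the three terms.
-/

open MeasureTheory Filter Set

/-- An N-function: increasing, continuous, convex on `[0,∞)`, vanishing exactly at `0`,
with `φ(t)/t → 0` at `0` and `φ(t)/t → ∞` at `∞`. -/
structure IsNFunction (φ : ℝ → ℝ) : Prop where
  mono : StrictMonoOn φ (Ici 0)
  cont : ContinuousOn φ (Ici 0)
  convex : ConvexOn ℝ (Ici 0) φ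
  zero_iff : ∀ t ∈ Ici (0:ℝ), (φ t = 0 ↔ t = 0)
  tendsto_zero : Tendsto (fun t => φ t / t) (nhdsWithin 0 (Ioi 0)) (nhds 0)
  tendsto_top : Tendsto (fun t => φ t / t) atTop atTop

theorem ContDiffOn.hasDerivWithinAt_iteratedDerivWithin {f : ℝ → ℝ} {s : Set ℝ}
    {n : WithTop ℕ∞} {k : ℕ} {x : ℝ} (hf : ContDiffOn ℝ n f s) (hs : UniqueDiffOn ℝ s)
    (hk : k < n) (hx : x ∈ s) :
    HasDerivWithinAt (iteratedDerivWithin k f s) (iteratedDerivWithin (k + 1) f s x) s x := by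
  rw [iteratedDerivWithin_succ]
  exact (hf.differentiableOn_iteratedDerivWithin hk hs x hx).hasDerivWithinAt

section Interval

variable {a b : ℝ}

theorem abs_sub_le_integral_abs_deriv {g g' : ℝ → ℝ}
    (hg : ∀ x ∈ Icc a b, HasDerivWithinAt g (g' x) (Icc a b) x)
    (hg' : ContinuousOn g' (Icc a b)) {x y : ℝ} (hx : x ∈ Icc a b) (hy : y ∈ Icc a b) :
    |g y - g x| ≤ ∫ t in a..b, |g' t| := by
  wlog hxy : x ≤ y generalizing x y
  · rw [abs_sub_comm]; exact this hy hx (le_of_not_ge hxy)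
  have hsub : Icc x y ⊆ Icc a b := Icc_subset_Icc hx.1 hy.2
  have hftc : ∫ t in x..y, g' t = g y - g x := by
    refine intervalIntegral.integral_eq_sub_of_hasDeriv_right_of_le hxy
      (fun t ht => (hg t (hsub ht)).continuousWithinAt.mono hsub) (fun t ht => ?_)
      ((hg'.mono hsub).intervalIntegrable_of_Icc hxy)
    have hnhds : Icc a b ∈ nhds t := Icc_mem_nhds (hx.1.trans_lt ht.1) (ht.2.trans_le hy.2)
    exact ((hg t (hsub (Ioo_subset_Icc_self ht))).hasDerivAt hnhds).hasDerivWithinAt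
  rw [← hftc]
  calc |∫ t in x..y, g' t| ≤ ∫ t in x..y, |g' t| :=
        intervalIntegral.abs_integral_le_integral_abs hxy
    _ ≤ ∫ t in a..b, |g' t| :=
        intervalIntegral.integral_mono_interval hx.1 hxy hy.2
          (.of_forall fun t => abs_nonneg _)
          (hg'.abs.intervalIntegrable_of_Icc (hx.1.trans (hxy.trans hy.2)))

theorem abs_deriv_le_slope_add_integral_abs {g g' g'' : ℝ → ℝ}
    (hg : ∀ x ∈ Icc a b, HasDerivWithinAt g (g' x) (Icc a b) x)
    (hg' : ∀ x ∈ Icc a b, HasDerivWithinAt g' (g'' x) (Icc a b) x)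
    (hg'' : ContinuousOn g'' (Icc a b)) {x y z : ℝ} (hx : a ≤ x) (hxy : x < y) (hy : y ≤ b)
    (hz : z ∈ Icc a b) :
    |g' z| ≤ (|g x| + |g y|) / (y - x) + ∫ t in a..b, |g'' t| := by
  have hsub : Icc x y ⊆ Icc a b := Icc_subset_Icc hx hy
  obtain ⟨c, hc, hslope⟩ := exists_hasDerivAt_eq_slope g g' hxy
    (fun t ht => (hg t (hsub ht)).continuousWithinAt.mono hsub)
    (fun t ht => (hg t (hsub (Ioo_subset_Icc_self ht))).hasDerivAt
      (Icc_mem_nhds (hx.trans_lt ht.1) (ht.2.trans_le hy)))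
  have hslope_le : |g' c| ≤ (|g x| + |g y|) / (y - x) := by
    rw [hslope, abs_div, abs_of_pos (sub_pos.2 hxy)]
    gcongr
    exact (abs_sub _ _).trans_eq (add_comm _ _)
  calc |g' z| ≤ |g' c| + |g' z - g' c| := sub_le_iff_le_add'.1 (abs_sub_abs_le_abs_sub _ _)
    _ ≤ _ := add_le_add hslope_le
        (abs_sub_le_integral_abs_deriv hg' hg'' (hsub (Ioo_subset_Icc_self hc)) hz)

theorem ContDiffOn.abs_iteratedDerivWithin_one_le {f : ℝ → ℝ} (hf : ContDiffOn ℝ 2 f (Icc a b))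
    {x y z h : ℝ} (hx : a ≤ x) (hy : y ≤ b) (hh : 0 < h) (hxy : h ≤ y - x) (hz : z ∈ Icc a b) :
    |iteratedDerivWithin 1 f (Icc a b) z| ≤
      (|f x| + |f y|) / h + ∫ t in a..b, |iteratedDerivWithin 2 f (Icc a b) t| := by
  have hxy' : x < y := sub_pos.1 (hh.trans_le hxy)
  have hs : UniqueDiffOn ℝ (Icc a b) := uniqueDiffOn_Icc (hx.trans_lt (hxy'.trans_le hy))
  have hf' := fun t (ht : t ∈ Icc a b) =>
    hf.hasDerivWithinAt_iteratedDerivWithin hs (k := 0) (by norm_num) ht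
  simp only [iteratedDerivWithin_zero, zero_add] at hf'
  refine (abs_deriv_le_slope_add_integral_abs hf'
    (fun t ht => hf.hasDerivWithinAt_iteratedDerivWithin hs (k := 1) (by norm_num) ht)
    (hf.continuousOn_iteratedDerivWithin le_rfl hs) hx hxy' hy hz).trans ?_
  gcongr

theorem exists_mul_le_integral_of_subinterval {g : ℝ → ℝ} {c d : ℝ}
    (hg : ContinuousOn g (Icc a b)) (hg0 : ∀ x ∈ Icc a b, 0 ≤ g x)
    (hac : a ≤ c) (hcd : c ≤ d) (hdb : d ≤ b) :
    ∃ t ∈ Icc c d, (d - c) * g t ≤ ∫ x in a..b, g x := by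
  have hsub : Icc c d ⊆ Icc a b := Icc_subset_Icc hac hdb
  obtain ⟨t, ht, hmin⟩ := isCompact_Icc.exists_isMinOn (nonempty_Icc.2 hcd) (hg.mono hsub)
  refine ⟨t, ht, ?_⟩
  calc (d - c) * g t = ∫ _ in c..d, g t := by simp
    _ ≤ ∫ x in c..d, g x :=
        intervalIntegral.integral_mono_on hcd intervalIntegrable_const
          ((hg.mono hsub).intervalIntegrable_of_Icc hcd) fun x hx => hmin hx
    _ ≤ ∫ x in a..b, g x :=
        intervalIntegral.integral_mono_interval hac hcd hdb
          (ae_restrict_of_forall_mem measurableSet_Ioc fun x hx => hg0 x (Ioc_subset_Icc_self hx))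
          (hg.intervalIntegrable_of_Icc (hac.trans (hcd.trans hdb)))

theorem ConvexOn.map_intervalAverage_le {φ g : ℝ → ℝ} {s : Set ℝ} (hab : a < b)
    (hφ : ConvexOn ℝ s φ) (hφc : ContinuousOn φ s) (hs : IsClosed s)
    (hg : ContinuousOn g (Icc a b)) (hgs : MapsTo g (Icc a b) s) :
    φ (⨍ x in a..b, g x) ≤ ⨍ x in a..b, φ (g x) := by
  rw [uIoc_of_le hab.le]
  refine hφ.map_set_average_le hφc hs (by simp [hab]) (by simp)
    (ae_restrict_of_forall_mem measurableSet_Ioc fun x hx => hgs (Ioc_subset_Icc_self hx))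
    (hg.integrableOn_Icc.mono_set Ioc_subset_Icc_self)
    ((hφc.comp hg hgs).integrableOn_Icc.mono_set Ioc_subset_Icc_self)

end Interval

theorem ConvexOn.map_add_le_avg_map_two_mul {φ : ℝ → ℝ} {s : Set ℝ} (hφ : ConvexOn ℝ s φ)
    {x y : ℝ} (hx : 2 * x ∈ s) (hy : 2 * y ∈ s) :
    φ (x + y) ≤ (φ (2 * x) + φ (2 * y)) / 2 := by
  have := hφ.2 hx hy (by norm_num : (0:ℝ) ≤ 1 / 2) (by norm_num : (0:ℝ) ≤ 1 / 2) (by norm_num)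
  simp only [smul_eq_mul] at this
  rw [show x + y = 1 / 2 * (2 * x) + 1 / 2 * (2 * y) by ring]
  linarith

theorem map_two_pow_mul_le_of_doubling {φ : ℝ → ℝ} {CΔ : ℝ} (hCΔ : 0 ≤ CΔ)
    (hΔ₂ : ∀ t ≥ (0:ℝ), φ (2 * t) ≤ CΔ * φ t) (k : ℕ) {t : ℝ} (ht : 0 ≤ t) :
    φ (2 ^ k * t) ≤ CΔ ^ k * φ t := by
  induction k with
  | zero => simp
  | succ k ih =>
    calc φ (2 ^ (k + 1) * t) = φ (2 * (2 ^ k * t)) := by ring_nf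
      _ ≤ CΔ * φ (2 ^ k * t) := hΔ₂ _ (by positivity)
      _ ≤ CΔ * (CΔ ^ k * φ t) := by gcongr
      _ = CΔ ^ (k + 1) * φ t := by ring

namespace IsNFunction

variable {φ : ℝ → ℝ}

theorem nonneg (hφ : IsNFunction φ) {t : ℝ} (ht : 0 ≤ t) : 0 ≤ φ t := by
  have hφ0 : φ 0 = 0 := (hφ.zero_iff 0 self_mem_Ici).2 rfl
  exact hφ0 ▸ hφ.mono.monotoneOn self_mem_Ici ht ht

theorem continuousOn_comp_mul_abs (hφ : IsNFunction φ) {g : ℝ → ℝ} {s : Set ℝ} {c : ℝ}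
    (hc : 0 ≤ c) (hg : ContinuousOn g s) : ContinuousOn (fun t => φ (c * |g t|)) s :=
  hφ.cont.comp (continuousOn_const.mul hg.abs) fun t _ => mem_Ici.2 (by positivity)

theorem map_integral_le (hφ : IsNFunction φ) {g : ℝ → ℝ} {a b : ℝ} (hab : a < b)
    (hg : ContinuousOn g (Icc a b)) (hg0 : ∀ x ∈ Icc a b, 0 ≤ g x) :
    φ (∫ x in a..b, g x) ≤ (b - a)⁻¹ * ∫ x in a..b, φ ((b - a) * g x) := by
  have hba : b - a ≠ 0 := (sub_pos.2 hab).ne'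
  have := hφ.convex.map_intervalAverage_le (g := fun x => (b - a) * g x) hab hφ.cont
    isClosed_Ici (continuousOn_const.mul hg)
    fun x hx => mem_Ici.2 (mul_nonneg (sub_pos.2 hab).le (hg0 x hx))
  rwa [interval_average_eq, interval_average_eq, smul_eq_mul, smul_eq_mul,
    intervalIntegral.integral_const_mul, inv_mul_cancel_left₀ hba] at this

theorem map_le_of_le_three_mul_add (hφ : IsNFunction φ) {CΔ : ℝ} (hCΔ : 1 ≤ CΔ)
    (hΔ₂ : ∀ t ≥ (0:ℝ), φ (2 * t) ≤ CΔ * φ t) {v u₁ u₂ w : ℝ} (hv : 0 ≤ v) (hu₁ : 0 ≤ u₁)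
    (hu₂ : 0 ≤ u₂) (hw : 0 ≤ w) (h : v ≤ 3 * u₁ + 3 * u₂ + w) :
    φ v ≤ CΔ ^ 4 * (φ u₁ + φ u₂ + φ w) := by
  have hmono := hφ.mono.monotoneOn
  have hmid : ∀ x y : ℝ, 0 ≤ x → 0 ≤ y → φ (x + y) ≤ (φ (2 * x) + φ (2 * y)) / 2 :=
    fun x y hx hy => hφ.convex.map_add_le_avg_map_two_mul
      (mem_Ici.2 (by positivity)) (mem_Ici.2 (by positivity))
  have h12 : ∀ u : ℝ, 0 ≤ u → φ (2 * (6 * u)) ≤ CΔ ^ 4 * φ u := fun u hu =>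
    (hmono (mem_Ici.2 (by positivity)) (mem_Ici.2 (by positivity)) (by linarith)).trans
      (map_two_pow_mul_le_of_doubling (by linarith) hΔ₂ 4 hu)
  have hpow : CΔ ≤ CΔ ^ 4 := le_self_pow₀ hCΔ (by norm_num)
  have hC4 : 0 ≤ CΔ ^ 4 := by positivity
  have hφw := hφ.nonneg hw
  calc φ v ≤ φ ((3 * u₁ + 3 * u₂) + w) := hmono (mem_Ici.2 hv) (mem_Ici.2 (by positivity)) h
    _ ≤ (φ (2 * (3 * u₁ + 3 * u₂)) + φ (2 * w)) / 2 := hmid _ _ (by positivity) hw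
    _ ≤ ((φ (2 * (6 * u₁)) + φ (2 * (6 * u₂))) / 2 + CΔ * φ w) / 2 := by
        gcongr
        · rw [show 2 * (3 * u₁ + 3 * u₂) = 6 * u₁ + 6 * u₂ by ring]
          exact hmid _ _ (by positivity) (by positivity)
        · exact hΔ₂ w hw
    _ ≤ ((CΔ ^ 4 * φ u₁ + CΔ ^ 4 * φ u₂) / 2 + CΔ ^ 4 * φ w) / 2 := by
        gcongr
        exacts [h12 u₁ hu₁, h12 u₂ hu₂]
    _ ≤ CΔ ^ 4 * (φ u₁ + φ u₂ + φ w) := by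
        linarith [mul_nonneg hC4 (hφ.nonneg hu₁), mul_nonneg hC4 (hφ.nonneg hu₂),
          mul_nonneg hC4 hφw]

end IsNFunction

/-- Orlicz interpolation, 1-D base case: for an N-function `φ` with Δ₂-constant `CΔ`,
there is `C = C(Δ₂(φ))` such that for every `δ > 0` and every `f ∈ C²([0,δ])`,
`φ(|f'(0)|) ≤ (C/δ) ∫₀^δ φ(δ⁻¹|f(t)|) + φ(δ|f''(t)|) dt`. -/
theorem orlicz_interpolation_1d (φ : ℝ → ℝ) (CΔ : ℝ) (hφ : IsNFunction φ)
    (hCΔ : 1 ≤ CΔ) (hΔ₂ : ∀ t ≥ (0:ℝ), φ (2 * t) ≤ CΔ * φ t) :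
    ∃ C > (0:ℝ), ∀ (δ : ℝ), 0 < δ → ∀ f : ℝ → ℝ, ContDiffOn ℝ 2 f (Icc 0 δ) →
      φ |iteratedDerivWithin 1 f (Icc 0 δ) 0| ≤
        (C / δ) * ∫ t in (0:ℝ)..δ,
          (φ (δ⁻¹ * |f t|) + φ (δ * |iteratedDerivWithin 2 f (Icc 0 δ) t|)) := by
  refine ⟨6 * CΔ ^ 4, by positivity, fun δ hδ f hf => ?_⟩
  set f'' := iteratedDerivWithin 2 f (Icc 0 δ)
  have hf''c : ContinuousOn f'' (Icc 0 δ) :=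
    hf.continuousOn_iteratedDerivWithin le_rfl (uniqueDiffOn_Icc hδ)
  have hg₀ := hφ.continuousOn_comp_mul_abs (inv_nonneg.2 hδ.le) hf.continuousOn
  have hg₂ := hφ.continuousOn_comp_mul_abs hδ.le hf''c
  rw [intervalIntegral.integral_add (hg₀.intervalIntegrable_of_Icc hδ.le)
    (hg₂.intervalIntegrable_of_Icc hδ.le)]
  obtain ⟨t₁, ht₁, h₁⟩ := exists_mul_le_integral_of_subinterval hg₀
    (fun t _ => hφ.nonneg (by positivity)) le_rfl (by positivity : 0 ≤ δ / 3) (by linarith)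
  obtain ⟨t₂, ht₂, h₂⟩ := exists_mul_le_integral_of_subinterval hg₀
    (fun t _ => hφ.nonneg (by positivity)) (by positivity : 0 ≤ 2 * δ / 3) (by linarith) le_rfl
  have hderiv := hf.abs_iteratedDerivWithin_one_le ht₁.1 ht₂.2 (by positivity : 0 < δ / 3)
    (by linarith [ht₁.2, ht₂.1]) (left_mem_Icc.2 hδ.le)
  have hjensen := hφ.map_integral_le hδ hf''c.abs fun t _ => abs_nonneg (f'' t)
  simp only [sub_zero] at hjensen
  set J₀ := ∫ t in (0:ℝ)..δ, φ (δ⁻¹ * |f t|)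
  set J₂ := ∫ t in (0:ℝ)..δ, φ (δ * |f'' t|)
  have hJ₂ : 0 ≤ J₂ := intervalIntegral.integral_nonneg hδ.le fun t _ => hφ.nonneg (by positivity)
  calc φ |iteratedDerivWithin 1 f (Icc 0 δ) 0|
      ≤ CΔ ^ 4 * (φ (δ⁻¹ * |f t₁|) + φ (δ⁻¹ * |f t₂|) + φ (∫ t in (0:ℝ)..δ, |f'' t|)) :=
        hφ.map_le_of_le_three_mul_add hCΔ hΔ₂ (abs_nonneg _) (by positivity) (by positivity)
          (intervalIntegral.integral_nonneg hδ.le fun t _ => abs_nonneg _)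
          (hderiv.trans_eq (by ring))
    _ ≤ CΔ ^ 4 * (3 / δ * J₀ + 3 / δ * J₀ + 6 / δ * J₂) := by
        gcongr CΔ ^ 4 * (?_ + ?_ + ?_)
        · rw [div_mul_eq_mul_div, le_div_iff₀ hδ]; linarith
        · rw [div_mul_eq_mul_div, le_div_iff₀ hδ]; linarith
        · exact hjensen.trans (by rw [inv_eq_one_div]; gcongr; norm_num)
    _ = 6 * CΔ ^ 4 / δ * (J₀ + J₂) := by ring
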